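/- arXiv:2202.11093 — 3 statements merged into one kernel-verified Lean document; each statement's English description precedes it below -/
import Mathlib

section
/- The only finitely generated normal subgroup of infinite index in a free group is the trivial subgroup. -/
/-!
Let `π : F → Q = F ⧸ N` and let `∂ : F → ℤ[Q]^S` be the Fox derivative composed with `π`, a
cocycle for the `Q`-action. On `N` it is a homomorphism, and sending the basis vector `(q, s)` to
the class of the Schreier generator `σ q · s · σ (q · π s)⁻¹` in `Nᵃᵇ` (for a set-theoretic section
`σ` of `π`) is a left inverse of `∂` on `N`. If `N` is finitely generated, the supports of `∂ n`,
`n ∈ N`, lie in one finite subset of `Q`; but conjugating `n` by `g` translates `∂ n` by `π g`, so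
for infinite `Q` all `∂ n` vanish. Hence `Nᵃᵇ = 1`, and since `N` is free (Nielsen–Schreier),
`N = 1`.
-/

open Finsupp

attribute [local instance] comapDistribMulAction

theorem Finsupp.eq_zero_of_forall_support_smul_subset {Q X : Type*} [Group Q] [Infinite Q]
    [AddCommMonoid X] (K : Finset Q) (m : Q →₀ X) (h : ∀ q : Q, (q • m).support ⊆ K) :
    m = 0 := by
  by_contra hm
  obtain ⟨q₀, hq₀⟩ := support_nonempty_iff.mpr hm
  have hmem (q : Q) : q * q₀ ∈ K := h q <| by simpa [mem_support_iff] using hq₀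
  have : Finite Q := Finite.of_injective (fun q => (⟨q * q₀, hmem q⟩ : K))
    fun a b hab => mul_right_cancel (congrArg Subtype.val hab)
  exact not_finite Q

theorem IsFreeGroup.subsingleton_of_subsingleton_abelianization {G : Type*} [Group G]
    [IsFreeGroup G] [Subsingleton (Abelianization G)] : Subsingleton G := by
  have : IsEmpty (Generators G) := by
    refine ⟨fun i => ?_⟩
    let f : G →* Multiplicative ℤ := lift fun _ => Multiplicative.ofAdd 1
    have : f (of i) = 1 := by
      rw [← Abelianization.lift_apply_of f, Subsingleton.elim (Abelianization.of (of i)) 1,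
        map_one]
    simp [f, lift_of] at this
  refine ⟨fun x y => ?_⟩
  have : MonoidHom.id G = 1 := ext_hom isEmptyElim
  simpa using (DFunLike.congr_fun this x).trans (DFunLike.congr_fun this y).symm

noncomputable section

def DistribMulAction.toMulAutMultiplicative (Q M : Type*) [Group Q] [AddMonoid M]
    [DistribMulAction Q M] : Q →* MulAut (Multiplicative M) where
  toFun q := AddEquiv.toMultiplicative (DistribMulAction.toAddEquiv M q)
  map_one' := by ext; simp
  map_mul' q q' := by ext; simp [mul_smul]

namespace FreeGroup

variable {S Q : Type*} [Group Q]

def foxLift (π : FreeGroup S →* Q) :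
    FreeGroup S →* Multiplicative (Q →₀ S →₀ ℤ) ⋊[DistribMulAction.toMulAutMultiplicative _ _] Q :=
  lift fun s => ⟨.ofAdd (single 1 (single s 1)), π (of s)⟩

/-- `Q →₀ S →₀ ℤ` is the free `ℤ[Q]`-module on `S`, and the `(q, s)`-coefficient of
`foxDeriv π w` is the coefficient of `q` in `π (∂w/∂s)`, for the Fox derivative `∂/∂s`. -/
def foxDeriv (π : FreeGroup S →* Q) (w : FreeGroup S) : Q →₀ S →₀ ℤ :=
  (foxLift π w).left.toAdd

variable (π : FreeGroup S →* Q)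

theorem foxLift_right (w : FreeGroup S) : (foxLift π w).right = π w := by
  change SemidirectProduct.rightHom.comp (foxLift π) w = π w
  congr 1
  ext s
  simp [foxLift]

theorem foxDeriv_mul (v w : FreeGroup S) :
    foxDeriv π (v * w) = foxDeriv π v + π v • foxDeriv π w := by
  rw [foxDeriv, _root_.map_mul, SemidirectProduct.mul_left, foxLift_right]
  rfl

theorem foxDeriv_one : foxDeriv π 1 = 0 := by
  simp [foxDeriv]

theorem foxDeriv_of (s : S) : foxDeriv π (of s) = single 1 (single s 1) := by
  simp [foxDeriv, foxLift]

theorem foxDeriv_inv (w : FreeGroup S) : foxDeriv π w⁻¹ = -((π w)⁻¹ • foxDeriv π w) := by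
  have h := foxDeriv_mul π w⁻¹ w
  rw [inv_mul_cancel, foxDeriv_one, _root_.map_inv] at h
  exact eq_neg_of_add_eq_zero_left h.symm

theorem foxDeriv_mul_of_mem {n : FreeGroup S} (hn : n ∈ π.ker) (w : FreeGroup S) :
    foxDeriv π (n * w) = foxDeriv π n + foxDeriv π w := by
  rw [foxDeriv_mul, MonoidHom.mem_ker.mp hn, one_smul]

theorem foxDeriv_conj_of_mem {n : FreeGroup S} (hn : n ∈ π.ker) (g : FreeGroup S) :
    foxDeriv π (g * n * g⁻¹) = π g • foxDeriv π n := by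
  rw [mul_assoc, foxDeriv_mul, foxDeriv_mul_of_mem π hn, smul_add, add_left_comm,
    ← foxDeriv_mul, mul_inv_cancel, foxDeriv_one, add_zero]

theorem exists_support_foxDeriv_subset (hfg : π.ker.FG) :
    ∃ K : Finset Q, ∀ n ∈ π.ker, (foxDeriv π n).support ⊆ K := by
  classical
  obtain ⟨X, hX⟩ := hfg
  refine ⟨X.sup fun x => (foxDeriv π x).support, fun n hn => ?_⟩
  rw [← hX] at hn
  induction hn using Subgroup.closure_induction with
  | mem x hx => exact Finset.le_sup (f := fun x => (foxDeriv π x).support) hx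
  | one => simp [foxDeriv_one]
  | mul x y hx _ ihx ihy =>
    rw [foxDeriv_mul_of_mem π (hX ▸ hx)]
    exact support_add.trans (Finset.union_subset ihx ihy)
  | inv x hx ihx =>
    rwa [foxDeriv_inv, MonoidHom.mem_ker.mp (hX ▸ hx), inv_one, one_smul, support_neg]

theorem foxDeriv_eq_zero_of_mem [Infinite Q] (hπ : Function.Surjective π) (hfg : π.ker.FG)
    {n : FreeGroup S} (hn : n ∈ π.ker) : foxDeriv π n = 0 := by
  obtain ⟨K, hK⟩ := exists_support_foxDeriv_subset π hfg
  refine eq_zero_of_forall_support_smul_subset K _ fun q => ?_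
  obtain ⟨g, rfl⟩ := hπ q
  rw [← foxDeriv_conj_of_mem π hn]
  exact hK _ ((MonoidHom.normal_ker π).conj_mem n hn g)

section Schreier

variable {π} {σ : Q → FreeGroup S}

def schreierElement (hσ : ∀ q, π (σ q) = q) (q : Q) (w : FreeGroup S) : π.ker :=
  ⟨σ q * w * (σ (q * π w))⁻¹, by simp [hσ]⟩

def schreierHom (hσ : ∀ q, π (σ q) = q) : (Q →₀ S →₀ ℤ) →+ Additive (Abelianization π.ker) :=
  liftAddHom fun q => liftAddHom fun s =>
    zmultiplesHom _ (.ofMul (.of (schreierElement hσ q (of s))))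

variable (hσ : ∀ q, π (σ q) = q)

theorem schreierElement_one (q : Q) : schreierElement hσ q 1 = 1 := by
  ext
  simp [schreierElement]

theorem schreierElement_mul (q : Q) (v w : FreeGroup S) :
    schreierElement hσ q (v * w) = schreierElement hσ q v * schreierElement hσ (q * π v) w := by
  ext
  simp [schreierElement, mul_assoc]

theorem schreierElement_inv (q : Q) (w : FreeGroup S) :
    schreierElement hσ q w⁻¹ = (schreierElement hσ (q * (π w)⁻¹) w)⁻¹ := by
  ext
  simp [schreierElement, mul_assoc]

theorem schreierHom_smul_foxDeriv (w : FreeGroup S) : ∀ q : Q,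
    schreierHom hσ (q • foxDeriv π w) = .ofMul (.of (schreierElement hσ q w)) := by
  induction w using FreeGroup.induction_on with
  | C1 => intro q; simp [foxDeriv_one, schreierElement_one]
  | of s =>
    intro q
    rw [foxDeriv_of, comapSMul_single, smul_eq_mul, mul_one, schreierHom, liftAddHom_apply_single,
      liftAddHom_apply_single, zmultiplesHom_apply, one_zsmul]
  | inv_of s ih =>
    intro q
    rw [foxDeriv_inv, smul_neg, smul_smul, map_neg, ih, schreierElement_inv]
    rfl
  | mul v w ihv ihw =>
    intro q
    rw [foxDeriv_mul, smul_add, smul_smul, map_add, ihv, ihw, schreierElement_mul]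
    rfl

theorem schreierHom_foxDeriv_of_mem {n : FreeGroup S} (hn : n ∈ π.ker) :
    schreierHom hσ (foxDeriv π n) = .ofMul (.of ⟨n, hn⟩) := by
  have hσ1 : σ 1 ∈ π.ker := by simp [hσ]
  have h : schreierElement hσ 1 n = ⟨σ 1, hσ1⟩ * ⟨n, hn⟩ * ⟨σ 1, hσ1⟩⁻¹ := by
    ext
    simp [schreierElement, MonoidHom.mem_ker.mp hn]
  rw [← one_smul Q (foxDeriv π n), schreierHom_smul_foxDeriv, h]
  congr 1
  rw [_root_.map_mul, _root_.map_mul, _root_.map_inv, mul_inv_cancel_comm]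

end Schreier

theorem ker_eq_bot_of_fg [Infinite Q] (hπ : Function.Surjective π)
    (hfg : π.ker.FG) : π.ker = ⊥ := by
  obtain ⟨σ, hσ⟩ := hπ.hasRightInverse
  have hab (x : π.ker) : Abelianization.of x = 1 := by
    have h := schreierHom_foxDeriv_of_mem hσ x.2
    rw [foxDeriv_eq_zero_of_mem π hπ hfg x.2, map_zero] at h
    exact congrArg Additive.toMul h.symm
  have : Subsingleton (Abelianization π.ker) :=
    subsingleton_of_forall_eq 1 fun a => QuotientGroup.induction_on a hab
  have := IsFreeGroup.subsingleton_of_subsingleton_abelianization (G := π.ker)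
  exact Subgroup.eq_bot_of_subsingleton _

end FreeGroup

end

theorem stmt5 (S : Type*) (N : Subgroup (FreeGroup S)) [N.Normal]
    (hfg : N.FG) (hidx : N.index = 0) : N = ⊥ := by
  have : Infinite (FreeGroup S ⧸ N) := Subgroup.index_eq_zero_iff_infinite.mp hidx
  rw [← QuotientGroup.ker_mk' N] at hfg ⊢
  exact FreeGroup.ker_eq_bot_of_fg _ (QuotientGroup.mk'_surjective N) hfg
end

section
/- If a free group F fits into a short exact sequence 1 → N → F → ℤ^m → 1 with N finitely generated and m ≥ 1, then F is infinite cyclic and m = 1 (equivalently, the rank of F is 1). -/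
/-!
Let `φ : F →* ℤ^m` be the quotient map, so `N = ker φ`. Call the values of `φ` on the prefixes of
a reduced word its prefix values. Free reduction can only remove prefix values, and for words in
`ker φ` neither concatenation nor inversion creates new ones; so the elements of `ker φ` whose
prefix values lie in a fixed set form a subgroup, and a finite generating set of `N` confines all
of `N` to finitely many prefix values. If `F` had two distinct generators `z, u` with
`φ z ≠ 1`, the commutators `⁅z ^ k, u⁆ ∈ N` would have the infinitely many prefix values
`φ z ^ k`. Hence `F` is cyclic, and so is its quotient `ℤ^m`, forcing `m = 1`.
-/

open scoped commutatorElement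

namespace FreeGroup

variable {α G : Type*}

theorem exists_map_of_ne_one {M : Type*} [Monoid M] [Nontrivial M] (φ : FreeGroup α →* M)
    (hφ : Function.Surjective φ) : ∃ a, φ (of a) ≠ 1 := by
  by_contra! h
  obtain ⟨y, hy⟩ := exists_ne (1 : M)
  obtain ⟨g, rfl⟩ := hφ y
  exact hy (by rw [ext_hom φ 1 h]; rfl)

variable [Group G] (φ : FreeGroup α →* G)

def prefixValues (L : List (α × Bool)) : Set G :=
  (fun P => φ (mk P)) '' {P | P <+: L}

theorem finite_prefixValues (L : List (α × Bool)) : (prefixValues φ L).Finite :=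
  (L.inits.finite_toSet.image _).subset (Set.image_mono fun _ hP => List.mem_inits _ _ |>.2 hP)

variable {φ}

@[simp]
theorem prefixValues_nil : prefixValues φ ([] : List (α × Bool)) = {1} := by
  simp [prefixValues, ← one_eq_mk]

theorem prefixValues_append_subset {L₁ L₂ : List (α × Bool)} (h : φ (mk L₁) = 1) :
    prefixValues φ (L₁ ++ L₂) ⊆ prefixValues φ L₁ ∪ prefixValues φ L₂ := by
  rintro _ ⟨P, ⟨R, hPR⟩, rfl⟩
  rcases List.append_eq_append_iff.1 hPR with ⟨A, rfl, -⟩ | ⟨C, rfl, rfl⟩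
  · exact Or.inl ⟨P, List.prefix_append P A, rfl⟩
  · refine Or.inr ⟨C, List.prefix_append C R, ?_⟩
    simp only [← mul_mk, _root_.map_mul, h, one_mul]

theorem Red.Step.prefixValues_subset {L L' : List (α × Bool)} (h : Red.Step L L') :
    prefixValues φ L' ⊆ prefixValues φ L := by
  rcases h with @⟨L₁, L₂, x, b⟩
  rintro _ ⟨P, ⟨R, hPR⟩, rfl⟩
  rcases List.append_eq_append_iff.1 hPR with ⟨A, rfl, -⟩ | ⟨C, rfl, rfl⟩
  · exact ⟨P, (List.prefix_append P A).trans (List.prefix_append _ _), rfl⟩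
  · refine ⟨L₁ ++ (x, b) :: (x, !b) :: C, ⟨R, by simp⟩, ?_⟩
    exact congrArg φ (Red.exact.2 ⟨_, Red.Step.not.to_red, Red.refl⟩)

theorem Red.prefixValues_subset {L L' : List (α × Bool)} (h : Red L L') :
    prefixValues φ L' ⊆ prefixValues φ L := by
  induction h with
  | refl => exact subset_rfl
  | tail _ hstep ih => exact hstep.prefixValues_subset.trans ih

theorem prefixValues_invRev_subset {L : List (α × Bool)} (h : φ (mk L) = 1) :
    prefixValues φ (invRev L) ⊆ prefixValues φ L := by
  rintro _ ⟨P, ⟨R, hPR⟩, rfl⟩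
  have hL : L = invRev R ++ invRev P := by rw [← invRev_append, hPR, invRev_invRev]
  refine ⟨invRev R, ⟨invRev P, hL.symm⟩, ?_⟩
  rwa [hL, ← mul_mk, _root_.map_mul, ← inv_mk (L := P), _root_.map_inv, mul_inv_eq_one] at h

variable [DecidableEq α]

variable (φ) in
def kerWithPrefixValuesIn (B : Set G) (hB : 1 ∈ B) : Subgroup (FreeGroup α) where
  carrier := {g | φ g = 1 ∧ prefixValues φ g.toWord ⊆ B}
  one_mem' := ⟨_root_.map_one φ, by simpa using hB⟩
  mul_mem' := by
    rintro a b ⟨ha, haB⟩ ⟨hb, hbB⟩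
    refine ⟨by rw [_root_.map_mul, ha, hb, one_mul], ?_⟩
    rw [toWord_mul]
    exact reduce.red.prefixValues_subset.trans <|
      (prefixValues_append_subset (by rwa [mk_toWord])).trans (Set.union_subset haB hbB)
  inv_mem' := by
    rintro a ⟨ha, haB⟩
    refine ⟨by rw [_root_.map_inv, ha, inv_one], ?_⟩
    rw [toWord_inv]
    exact (prefixValues_invRev_subset (by rwa [mk_toWord])).trans haB

theorem exists_finite_prefixValues_of_fg {N : Subgroup (FreeGroup α)} (hN : N ≤ φ.ker)
    (hfg : N.FG) : ∃ B : Set G, B.Finite ∧ ∀ g ∈ N, prefixValues φ g.toWord ⊆ B := by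
  obtain ⟨S, rfl⟩ := hfg
  set B := insert 1 (⋃ s ∈ S, prefixValues φ s.toWord)
  have hSB : Subgroup.closure S ≤ kerWithPrefixValuesIn φ B (Set.mem_insert 1 _) :=
    (Subgroup.closure_le _).2 fun s hs =>
      ⟨hN (Subgroup.subset_closure hs),
        (Set.subset_biUnion_of_mem (u := fun s => prefixValues φ s.toWord) hs).trans
          (Set.subset_insert _ _)⟩
  exact ⟨B, (S.finite_toSet.biUnion fun s _ => finite_prefixValues φ _).insert 1,
    fun g hg => (hSB hg).2⟩

theorem replicate_prefix_toWord_commutator {z u : α} (h : z ≠ u) (k : ℕ) :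
    List.replicate k (z, true) <+: ⁅of z ^ k, of u⁆.toWord := by
  rcases Nat.eq_zero_or_pos k with rfl | hk
  · exact List.nil_prefix
  set L := List.replicate k (z, true) ++ [(u, true)] ++ List.replicate k (z, false) ++ [(u, false)]
  have hL : ⁅of z ^ k, of u⁆ = mk L := by
    rw [commutatorElement_def, ← mk_toWord (x := of z ^ k), toWord_of_pow, of, inv_mk, inv_mk,
      mul_mk, mul_mk, mul_mk]
    simp [L, invRev]
  have hred : IsReduced L := by
    simp [L, IsReduced, List.isChain_append, List.isChain_cons, List.isChain_replicate_of_rel,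
      List.getLast?_replicate, List.head?_append, List.head?_replicate, hk.ne', h, h.symm]
  rw [hL, toWord_mk, hred.reduce_eq]
  simp [L]

theorem not_fg_ker {H : Type*} [CommGroup H] (φ : FreeGroup α →* H) {z u : α} (hzu : z ≠ u)
    (hz : ¬IsOfFinOrder (φ (of z))) : ¬φ.ker.FG := by
  intro hfg
  obtain ⟨B, hB, hkerB⟩ := exists_finite_prefixValues_of_fg le_rfl hfg
  refine Set.infinite_range_of_injective (injective_pow_iff_not_isOfFinOrder.2 hz) (hB.subset ?_)
  rintro _ ⟨k, rfl⟩
  have hcomm : ⁅of z ^ k, of u⁆ ∈ φ.ker := by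
    rw [MonoidHom.mem_ker, map_commutatorElement, commutatorElement_eq_one_iff_commute]
    exact Commute.all _ _
  refine hkerB _ hcomm ⟨_, replicate_prefix_toWord_commutator hzu k, ?_⟩
  dsimp only
  rw [← toWord_of_pow, mk_toWord, map_pow]

end FreeGroup

theorem Module.finrank_int_le_one_of_isAddCyclic (M : Type*) [AddCommGroup M] [Module.Free ℤ M]
    [Module.Finite ℤ M] [IsAddCyclic M] : Module.finrank ℤ M ≤ 1 := by
  obtain ⟨g, hg⟩ := IsAddCyclic.exists_generator (α := M)
  exact finrank_le_one_iff.2 ⟨g, fun w => AddSubgroup.mem_zmultiples_iff.1 (hg w)⟩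

theorem stmt6_general (n m : ℕ) (hm : 1 ≤ m)
    (N : Subgroup (FreeGroup (Fin n))) [N.Normal] (hfg : N.FG)
    (e : (FreeGroup (Fin n) ⧸ N) ≃* Multiplicative (Fin m → ℤ)) :
    n = 1 ∧ m = 1 := by
  set φ := e.toMonoidHom.comp (QuotientGroup.mk' N)
  have hφ : Function.Surjective φ := e.surjective.comp (QuotientGroup.mk'_surjective N)
  have hker : φ.ker = N := by simp [φ]
  have hn : n = 1 := by
    have : NeZero m := ⟨by omega⟩
    obtain ⟨z, hz⟩ := FreeGroup.exists_map_of_ne_one φ hφ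
    by_contra hne
    obtain ⟨u, hu⟩ := @exists_ne _ (Fin.nontrivial_iff_two_le.2 (by have := z.pos; omega)) z
    exact FreeGroup.not_fg_ker φ hu.symm (not_isOfFinOrder_of_isMulTorsionFree hz) (hker ▸ hfg)
  subst hn
  have : IsAddCyclic (Fin m → ℤ) := isCyclic_multiplicative_iff.1 (isCyclic_of_surjective φ hφ)
  have hm1 : m ≤ 1 := by
    simpa using Module.finrank_int_le_one_of_isAddCyclic (Fin m → ℤ)
  exact ⟨rfl, by omega⟩

theorem stmt6 (n m : ℕ) (hn : 1 ≤ n) (hm : 1 ≤ m)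
    (N : Subgroup (FreeGroup (Fin n))) [N.Normal] (hfg : N.FG)
    (e : (FreeGroup (Fin n) ⧸ N) ≃* Multiplicative (Fin m → ℤ)) :
    n = 1 ∧ m = 1 :=
  stmt6_general n m hm N hfg e
end

section
/- Suppose every infinite-index subgroup of a group G is free and G is not free. If G splits as a nontrivial free product G = A * B, then one obtains a contradiction; hence G does not split as a nontrivial free product. -/
def IsFree (G : Type*) [Group G] : Prop := ∃ S : Type, Nonempty (G ≃* FreeGroup S)

/-! In a free product of two nontrivial groups `A ∗ B` neither factor has finite index: for
nontrivial `a ∈ A`, `b ∈ B`, every power `(a b)ⁿ` with `n > 0` is a reduced word beginning in `A`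
and ending in `B`, so by uniqueness of reduced words it lies in no factor, whereas a finite-index
subgroup contains a positive power of every element. Hence both factors are free by hypothesis,
and then so is their free product. -/

theorem IsFree.of_mulEquiv {G H : Type*} [Group G] [Group H] (hG : IsFree G) (e : H ≃* G) :
    IsFree H :=
  let ⟨S, ⟨f⟩⟩ := hG
  ⟨S, ⟨e.trans f⟩⟩

theorem IsFree.coprodI {ι : Type} {G : ι → Type*} [∀ i, Group (G i)] (hG : ∀ i, IsFree (G i)) :
    IsFree (Monoid.CoprodI G) := by
  choose S e using hG
  exact ⟨Σ i, S i, ⟨(Monoid.CoprodI.FreeGroupBasis.coprodI fun i => ⟨(e i).some⟩).repr⟩⟩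

namespace Monoid.CoprodI

variable {ι : Type*} {M : ι → Type*}

section Monoid

variable [∀ i, Monoid (M i)]

theorem NeWord.prod_ne_of {i j k : ι} (hij : i ≠ j) (w : NeWord M i j) (x : M k) :
    w.prod ≠ of x := by
  classical
  intro h
  have hword (v : Word M) (hv : v.prod = of x) : w.toWord = v :=
    Word.equiv.symm.injective (h.trans hv.symm)
  by_cases hx : x = 1
  · refine w.toList_ne_nil (congrArg Word.toList (hword Word.empty ?_))
    rw [Word.prod_empty, hx, map_one]
  · have hw : w.toList = [⟨k, x⟩] :=
      congrArg Word.toList (hword _ (NeWord.prod_singleton x hx))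
    have hhead := w.toList_head?
    have hlast := w.toList_getLast?
    simp only [hw, List.head?_cons, List.getLast?_singleton, Option.some.injEq] at hhead hlast
    exact hij ((congrArg Sigma.fst hhead).symm.trans (congrArg Sigma.fst hlast))

theorem exists_neWord_prod_eq_pow {i j : ι} (hij : i ≠ j) {a : M i} (ha : a ≠ 1) {b : M j}
    (hb : b ≠ 1) (n : ℕ) : ∃ w : NeWord M i j, w.prod = (of a * of b) ^ (n + 1) := by
  let ab := NeWord.append (NeWord.singleton a ha) hij (NeWord.singleton b hb)
  have hab : ab.prod = of a * of b := by simp [ab]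
  induction n with
  | zero => exact ⟨ab, by rw [hab, pow_one]⟩
  | succ n ih =>
    obtain ⟨w, hw⟩ := ih
    exact ⟨w.append hij.symm ab, by rw [NeWord.append_prod, hw, hab, ← pow_succ]⟩

end Monoid

theorem index_range_of_eq_zero [∀ i, Group (M i)] {i j : ι} (hij : i ≠ j) [Nontrivial (M i)]
    [Nontrivial (M j)] : (of : M i →* CoprodI M).range.index = 0 := by
  by_contra hindex
  obtain ⟨a, ha⟩ := exists_ne (1 : M i)
  obtain ⟨b, hb⟩ := exists_ne (1 : M j)
  obtain ⟨n, hn, -, x, hx⟩ := Subgroup.exists_pow_mem_of_index_ne_zero hindex (of a * of b)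
  obtain ⟨w, hw⟩ := exists_neWord_prod_eq_pow hij ha hb (n - 1)
  rw [Nat.sub_add_cancel hn] at hw
  exact w.prod_ne_of hij x (hw.trans hx.symm)

end Monoid.CoprodI

namespace Monoid.Coprod

universe u

variable (G H : Type u) [Group G] [Group H]

instance instGroupCond : ∀ b, Group (cond b G H)
  | true => ‹Group G›
  | false => ‹Group H›

instance instNontrivialCond [Nontrivial G] [Nontrivial H] : ∀ b, Nontrivial (cond b G H)
  | true => ‹Nontrivial G›
  | false => ‹Nontrivial H›

def mulEquivCoprodI : G ∗ H ≃* CoprodI (fun b => cond b G H) :=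
  MonoidHom.toMulEquiv
    (lift (CoprodI.of (M := fun b => cond b G H) (i := true))
      (CoprodI.of (M := fun b => cond b G H) (i := false)))
    (CoprodI.lift fun | true => inl | false => inr)
    (by ext <;> simp)
    (by ext b x; cases b <;> simp)

end Monoid.Coprod

theorem stmt12 (G : Type*) [Group G]
    (h : ∀ H : Subgroup G, H.index = 0 → IsFree H) (hG : ¬ IsFree G) :
    ¬ ∃ (A B : Type) (_ : Group A) (_ : Group B) (_ : Nontrivial A) (_ : Nontrivial B),
      Nonempty (G ≃* Monoid.Coprod A B) := by
  rintro ⟨A, B, _, _, _, _, ⟨e⟩⟩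
  let E := e.trans (Monoid.Coprod.mulEquivCoprodI A B)
  have hfactor (b : Bool) : IsFree (cond b A B) := by
    let f := E.symm.toMonoidHom.comp (Monoid.CoprodI.of (i := b))
    have hf : Function.Injective f := E.symm.injective.comp (Monoid.CoprodI.of_injective b)
    have hindex : f.range.index = 0 := by
      rw [MonoidHom.range_comp, Subgroup.index_map_of_bijective E.symm.bijective]
      exact Monoid.CoprodI.index_range_of_eq_zero (Bool.not_ne_self b).symm
    exact (h _ hindex).of_mulEquiv (MonoidHom.ofInjective hf)
  exact hG ((IsFree.coprodI hfactor).of_mulEquiv E)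
end
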